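/- Let Ỹ_m = Σ over atomic set partitions π of [m] of ∏_{β ∈ π} v_{|β|} ∈ R. Then for every n ≥ 1: Y_n = Σ_{m=1}^{n} Ỹ_m · Y_{n−m}. Equivalently, the ordinary generating functions Ỹ = Σ_{m≥1} Ỹ_m t^m and Y = Σ_{n≥0} Y_n t^n in R[[t]] satisfy Ỹ = 1 − 1/Y, i.e. Y·(1 − Ỹ) = 1. -/

import Mathlib

open Finset MvPolynomial

/-- The polynomial ring `ℚ[v₁, v₂, …]`; the variable `X l` represents `v_l`. -/
abbrev BellRing : Type := MvPolynomial ℕ ℚ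

/-- A set partition `π` of `[m] = Finset.range m` is atomic if no subset of its blocks
forms a partition of `[k]` for some `1 ≤ k < m`. -/
def IsAtomicPartition {m : ℕ} (π : Finpartition (Finset.range m)) : Prop :=
  ¬ ∃ k : ℕ, 0 < k ∧ k < m ∧ ∃ S ⊆ π.parts, S.sup id = Finset.range k

/-- The complete Bell polynomial `Y_n = Σ_{π ⊢ [n]} ∏_{β ∈ π} v_{|β|}`. -/
noncomputable def bellY (n : ℕ) : BellRing :=
  ∑ π : Finpartition (Finset.range n), ∏ β ∈ π.parts, X β.card

/-- The atomic Bell polynomial `Ỹ_m = Σ_{π ⊢ [m] atomic} ∏_{β ∈ π} v_{|β|}`. -/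
noncomputable def atomicY (m : ℕ) : BellRing :=
  ∑ᶠ π : {π : Finpartition (Finset.range m) // IsAtomicPartition π},
    ∏ β ∈ π.val.parts, X β.card

/-!
Every partition `π` of `[n]`, `n ≥ 1`, has a least `k ≥ 1` such that `[k]` is a union of blocks
of `π`. The blocks inside `[k]` form an atomic partition of `[k]`, and the remaining blocks, shifted
down by `k`, form an arbitrary partition of `[n - k]`; conversely every such pair glues back to a
partition whose first split is at `k`. The monomial of `π` is the product of the monomials of the
two pieces, so summing over `k` gives `Y_n = ∑ Ỹ_k Y_{n-k}`, which is the coefficientwise form of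
`Y · (1 - Ỹ) = 1`.
-/

theorem Finset.map_preimage_of_subset_map {α β : Type*} {f : α ↪ β} {s : Finset α}
    {q : Finset β} (hq : q ⊆ s.map f) : (q.preimage f f.injective.injOn).map f = q := by
  ext b
  simp only [mem_map, mem_preimage]
  refine ⟨fun ⟨a, ha, hab⟩ => hab ▸ ha, fun hb => ?_⟩
  obtain ⟨a, -, rfl⟩ := mem_map.1 (hq hb)
  exact ⟨a, hb, rfl⟩

namespace Finpartition

variable {α β : Type*} [DecidableEq α] {s u : Finset α}

section Glue

def glue (P : Finpartition s) (Q : Finpartition (u \ s)) (hsu : s ⊆ u) : Finpartition u where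
  parts := P.parts ∪ Q.parts
  supIndep := by
    rw [supIndep_iff_pairwiseDisjoint, coe_union]
    exact P.disjoint.union Q.disjoint fun p hp q hq _ =>
      disjoint_sdiff.mono (P.le hp) (Q.le hq)
  sup_parts := by rw [sup_union, P.sup_parts, Q.sup_parts]; exact union_sdiff_of_subset hsu
  bot_notMem := by simp

@[simp]
lemma parts_glue (P : Finpartition s) (Q : Finpartition (u \ s)) (hsu : s ⊆ u) :
    (P.glue Q hsu).parts = P.parts ∪ Q.parts := rfl

lemma subset_sup_or_disjoint_sup {P : Finpartition u} {S : Finset (Finset α)}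
    (hS : S ⊆ P.parts) {p : Finset α} (hp : p ∈ P.parts) :
    p ⊆ S.sup id ∨ Disjoint p (S.sup id) := by
  by_cases hpS : p ∈ S
  · exact Or.inl (le_sup (f := id) hpS)
  · exact Or.inr (P.supIndep hS hp hpS)

variable (P : Finpartition u)

lemma parts_restrict_of_subset_or_disjoint (hsu : s ⊆ u)
    (hP : ∀ p ∈ P.parts, p ⊆ s ∨ Disjoint p s) :
    (P.restrict hsu).parts = P.parts.filter (· ⊆ s) := by
  ext q
  simp only [restrict, mem_erase, mem_image, mem_filter]
  constructor
  · rintro ⟨hq, p, hp, rfl⟩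
    rcases hP p hp with h | h
    · simpa [inf_eq_left.2 h] using ⟨hp, h⟩
    · exact absurd (disjoint_iff.1 h) hq
  · rintro ⟨hq, hqs⟩
    exact ⟨P.ne_bot hq, q, hq, inf_eq_left.2 hqs⟩

lemma parts_avoid_of_subset_or_disjoint (hP : ∀ p ∈ P.parts, p ⊆ s ∨ Disjoint p s) :
    (P.avoid s).parts = P.parts.filter (¬ · ⊆ s) := by
  ext q
  simp only [mem_avoid, mem_filter]
  constructor
  · rintro ⟨p, hp, hps, rfl⟩
    rw [(hP p hp).resolve_left hps |>.sdiff_eq_left]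
    exact ⟨hp, hps⟩
  · rintro ⟨hq, hqs⟩
    exact ⟨q, hq, hqs, ((hP q hq).resolve_left hqs).sdiff_eq_left⟩

lemma glue_restrict_avoid (hsu : s ⊆ u) (hP : ∀ p ∈ P.parts, p ⊆ s ∨ Disjoint p s) :
    (P.restrict hsu).glue (P.avoid s) hsu = P := by
  ext1
  rw [parts_glue, parts_restrict_of_subset_or_disjoint P hsu hP,
    parts_avoid_of_subset_or_disjoint P hP, filter_union_filter_not_eq]

variable (P : Finpartition s) (Q : Finpartition (u \ s)) (hsu : s ⊆ u)

lemma not_subset_of_mem_parts_sdiff {q : Finset α} (hq : q ∈ Q.parts) : ¬ q ⊆ s := fun hqs => by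
  obtain ⟨a, ha⟩ := Q.nonempty_of_mem_parts hq
  exact (mem_sdiff.1 (Q.subset hq ha)).2 (hqs ha)

lemma subset_or_disjoint_of_mem_parts_glue : ∀ p ∈ (P.glue Q hsu).parts, p ⊆ s ∨ Disjoint p s := by
  simp only [parts_glue, mem_union]
  rintro p (hp | hp)
  · exact Or.inl (P.subset hp)
  · exact Or.inr (disjoint_sdiff.symm.mono_left (Q.subset hp))

lemma restrict_glue : (P.glue Q hsu).restrict hsu = P := by
  ext1
  rw [parts_restrict_of_subset_or_disjoint _ hsu (subset_or_disjoint_of_mem_parts_glue P Q hsu),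
    parts_glue, filter_union, filter_true_of_mem fun p hp => P.subset hp,
    filter_false_of_mem fun q hq => not_subset_of_mem_parts_sdiff Q hq, union_empty]

lemma avoid_glue : (P.glue Q hsu).avoid s = Q := by
  ext1
  rw [parts_avoid_of_subset_or_disjoint _ (subset_or_disjoint_of_mem_parts_glue P Q hsu),
    parts_glue, filter_union, filter_false_of_mem fun p hp => not_not.2 (P.subset hp),
    filter_true_of_mem fun q hq => not_subset_of_mem_parts_sdiff Q hq, empty_union]

lemma prod_parts_glue {M : Type*} [CommMonoid M] (f : Finset α → M) :
    ∏ p ∈ (P.glue Q hsu).parts, f p = (∏ p ∈ P.parts, f p) * ∏ q ∈ Q.parts, f q :=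
  prod_union (disjoint_left.2 fun _ hp hq => not_subset_of_mem_parts_sdiff Q hq (P.subset hp))

end Glue

section Relabel

variable [DecidableEq β]

def finsetMap (f : α ↪ β) (P : Finpartition s) : Finpartition (s.map f) where
  parts := P.parts.map (mapEmbedding f).toEmbedding
  supIndep := by
    rw [supIndep_iff_pairwiseDisjoint, coe_map]
    rintro _ ⟨p, hp, rfl⟩ _ ⟨q, hq, rfl⟩ hpq
    exact (disjoint_map _).2 (P.disjoint hp hq (ne_of_apply_ne _ hpq))
  sup_parts := by
    rw [sup_map, ← congrArg (Finset.map f) P.sup_parts]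
    exact (apply_sup_eq_sup_comp (Finset.map f) (fun _ _ => map_union _ _) (map_empty f)).symm
  bot_notMem := by simp

@[simp]
lemma parts_finsetMap (f : α ↪ β) (P : Finpartition s) :
    (P.finsetMap f).parts = P.parts.map (mapEmbedding f).toEmbedding := rfl

noncomputable def finsetComap (f : α ↪ β) (Q : Finpartition (s.map f)) : Finpartition s :=
  ofExistsUnique (Q.parts.image fun q => q.preimage f f.injective.injOn)
    (by
      simp only [mem_image]
      rintro _ ⟨q, hq, rfl⟩
      exact preimage_subset (Q.subset hq))
    (by
      intro a ha
      obtain ⟨q, ⟨hq, hfa⟩, huniq⟩ := Q.existsUnique_mem (mem_map_of_mem f ha)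
      refine ⟨q.preimage f f.injective.injOn, ⟨mem_image_of_mem _ hq, mem_preimage.2 hfa⟩, ?_⟩
      rintro _ ⟨hq'', ha'⟩
      obtain ⟨q', hq', rfl⟩ := mem_image.1 hq''
      rw [huniq q' ⟨hq', mem_preimage.1 ha'⟩])
    (by
      simp only [mem_image, not_exists, not_and]
      intro q hq h
      rw [← map_preimage_of_subset_map (Q.subset hq), h, map_empty] at hq
      exact Q.empty_notMem_parts hq)

lemma finsetMap_finsetComap (f : α ↪ β) (Q : Finpartition (s.map f)) :
    (Q.finsetComap f).finsetMap f = Q := by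
  refine Finpartition.ext ?_
  rw [parts_finsetMap, finsetComap, ofExistsUnique_parts, map_eq_image, image_image]
  convert image_id (s := Q.parts) using 1
  exact image_congr fun q hq => map_preimage_of_subset_map (Q.subset hq)

lemma finsetMap_bijective (f : α ↪ β) : Function.Bijective (finsetMap (s := s) f) :=
  ⟨fun _ _ h => Finpartition.ext (map_injective _ (congrArg parts h)),
    fun Q => ⟨Q.finsetComap f, finsetMap_finsetComap f Q⟩⟩

lemma sum_prod_card_finsetMap {R : Type*} [CommSemiring R] (f : α ↪ β) (g : ℕ → R) :
    ∑ Q : Finpartition (s.map f), ∏ q ∈ Q.parts, g #q =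
      ∑ P : Finpartition s, ∏ p ∈ P.parts, g #p := by
  refine (Fintype.sum_bijective _ (finsetMap_bijective f) _ _ fun P => ?_).symm
  simp only [parts_finsetMap, prod_map, RelEmbedding.coe_toEmbedding, mapEmbedding_apply, card_map]

end Relabel

section FirstSplit

variable {n m k : ℕ} (π : Finpartition (range n))

def SplitsAt (k : ℕ) : Prop := ∃ S ⊆ π.parts, S.sup id = range k

noncomputable def firstSplit : ℕ := sInf {k | 0 < k ∧ π.SplitsAt k}

lemma splitsAt_self : π.SplitsAt n := ⟨π.parts, subset_rfl, π.sup_parts⟩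

lemma firstSplit_pos_and_splitsAt (hn : 0 < n) : 0 < π.firstSplit ∧ π.SplitsAt π.firstSplit :=
  Nat.sInf_mem (s := {k | 0 < k ∧ π.SplitsAt k}) ⟨n, hn, π.splitsAt_self⟩

lemma firstSplit_le_of_splitsAt (hk : 0 < k) (h : π.SplitsAt k) : π.firstSplit ≤ k :=
  Nat.sInf_le (s := {k | 0 < k ∧ π.SplitsAt k}) ⟨hk, h⟩

lemma SplitsAt.subset_or_disjoint {π : Finpartition (range n)} (h : π.SplitsAt k) :
    ∀ p ∈ π.parts, p ⊆ range k ∨ Disjoint p (range k) := by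
  obtain ⟨S, hS, hSk⟩ := h
  exact hSk ▸ fun p hp => subset_sup_or_disjoint_sup hS hp

lemma splitsAt_restrict_iff (hmn : m ≤ n) (hm : π.SplitsAt m) (hkm : k ≤ m) :
    (π.restrict (range_subset_range.2 hmn)).SplitsAt k ↔ π.SplitsAt k := by
  rw [SplitsAt, parts_restrict_of_subset_or_disjoint π _ hm.subset_or_disjoint]
  refine ⟨fun ⟨S, hS, hSk⟩ => ⟨S, hS.trans (filter_subset _ _), hSk⟩, fun ⟨S, hS, hSk⟩ => ?_⟩
  refine ⟨S, fun p hp => mem_filter.2 ⟨hS hp, ?_⟩, hSk⟩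
  exact (le_sup (f := id) hp).trans (hSk ▸ range_subset_range.2 hkm)

lemma firstSplit_eq_iff (hm : 0 < m) (hmn : m ≤ n) :
    π.firstSplit = m ↔
      π.SplitsAt m ∧ IsAtomicPartition (π.restrict (range_subset_range.2 hmn)) := by
  obtain ⟨hpos, hsplit⟩ := π.firstSplit_pos_and_splitsAt (hm.trans_le hmn)
  constructor
  · rintro rfl
    refine ⟨hsplit, fun ⟨k, hk, hkm, hk_split⟩ => ?_⟩
    have := π.firstSplit_le_of_splitsAt hk ((π.splitsAt_restrict_iff hmn hsplit hkm.le).1 hk_split)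
    exact (this.trans_lt hkm).false
  · rintro ⟨hm_split, hatomic⟩
    refine (π.firstSplit_le_of_splitsAt hm hm_split).antisymm (not_lt.1 fun hlt => hatomic ?_)
    exact ⟨_, hpos, hlt, (π.splitsAt_restrict_iff hmn hm_split hlt.le).2 hsplit⟩

lemma firstSplit_glue (hm : 0 < m) (hmn : m ≤ n) {σ : Finpartition (range m)}
    (hσ : IsAtomicPartition σ) (τ : Finpartition (range n \ range m)) :
    (σ.glue τ (range_subset_range.2 hmn)).firstSplit = m := by
  refine (firstSplit_eq_iff _ hm hmn).2 ⟨⟨σ.parts, subset_union_left, σ.sup_parts⟩, ?_⟩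
  rwa [restrict_glue]

end FirstSplit

end Finpartition

open Finpartition

lemma range_sdiff_range_eq_map {m n : ℕ} (hmn : m ≤ n) :
    range n \ range m = (range (n - m)).map (addLeftEmbedding m) := by
  ext x
  simp only [mem_sdiff, mem_range, mem_map, addLeftEmbedding_apply]
  constructor
  · exact fun ⟨hxn, hxm⟩ => ⟨x - m, by omega, by omega⟩
  · rintro ⟨y, hy, rfl⟩
    omega

lemma bellY_zero : bellY 0 = 1 := by
  rw [bellY, range_zero, ← bot_eq_empty, Fintype.sum_unique, default_eq_empty, empty_parts,
    prod_empty]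

lemma bellY_sub_eq_sum_finpartition_sdiff {m n : ℕ} (hmn : m ≤ n) :
    bellY (n - m) = ∑ τ : Finpartition (range n \ range m), ∏ β ∈ τ.parts, X #β := by
  rw [range_sdiff_range_eq_map hmn, sum_prod_card_finsetMap, bellY]

lemma atomicY_eq_sum_filter (m : ℕ) [DecidablePred (IsAtomicPartition (m := m))] :
    atomicY m = ∑ σ : Finpartition (range m) with IsAtomicPartition σ, ∏ β ∈ σ.parts, X #β := by
  rw [atomicY, finsum_eq_sum_of_fintype, sum_subtype _ fun _ => mem_filter_univ _]

lemma sum_filter_firstSplit_eq {m n : ℕ} (hm : 0 < m) (hmn : m ≤ n) :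
    ∑ π : Finpartition (range n) with π.firstSplit = m, ∏ β ∈ π.parts, (X #β : BellRing) =
      atomicY m * bellY (n - m) := by
  classical
  have hsub : range m ⊆ range n := range_subset_range.2 hmn
  have hsplit {π : Finpartition (range n)} (hπ : π.firstSplit = m) :=
    (firstSplit_eq_iff π hm hmn).1 hπ
  rw [atomicY_eq_sum_filter, bellY_sub_eq_sum_finpartition_sdiff hmn, sum_mul_sum,
    ← sum_product']
  refine sum_bij' (fun π _ => (π.restrict hsub, π.avoid (range m)))
    (fun στ _ => στ.1.glue στ.2 hsub) (fun π hπ => ?_) (fun στ hστ => ?_) (fun π hπ => ?_)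
    (fun στ _ => ?_) (fun π hπ => ?_)
  · simpa using (hsplit (mem_filter.1 hπ).2).2
  · simpa using firstSplit_glue hm hmn (mem_filter.1 (mem_product.1 hστ).1).2 στ.2
  · exact glue_restrict_avoid π hsub (hsplit (mem_filter.1 hπ).2).1.subset_or_disjoint
  · exact Prod.ext (restrict_glue _ _ hsub) (avoid_glue _ _ hsub)
  · rw [← prod_parts_glue _ _ hsub,
      glue_restrict_avoid π hsub (hsplit (mem_filter.1 hπ).2).1.subset_or_disjoint]

theorem bellY_eq_sum_atomicY_mul_bellY {n : ℕ} (hn : 1 ≤ n) :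
    bellY n = ∑ m ∈ Icc 1 n, atomicY m * bellY (n - m) := by
  rw [bellY, ← sum_fiberwise_of_maps_to (g := firstSplit) (t := Icc 1 n)
    fun π _ => mem_Icc.2 ⟨(π.firstSplit_pos_and_splitsAt hn).1,
      π.firstSplit_le_of_splitsAt hn π.splitsAt_self⟩]
  exact sum_congr rfl fun m hm => sum_filter_firstSplit_eq (mem_Icc.1 hm).1 (mem_Icc.1 hm).2

theorem bellSeries_mul_one_sub_atomicSeries :
    (PowerSeries.mk fun n => bellY n) *
        (1 - PowerSeries.mk fun m => if m = 0 then 0 else atomicY m) = 1 := by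
  set A : PowerSeries BellRing := PowerSeries.mk fun m => if m = 0 then 0 else atomicY m
  refine PowerSeries.ext fun n => ?_
  rw [mul_sub, mul_one, map_sub, mul_comm, PowerSeries.coeff_mul,
    Nat.sum_antidiagonal_eq_sum_range_succ
      (fun i j => PowerSeries.coeff i A * PowerSeries.coeff j _),
    PowerSeries.coeff_one]
  rcases n.eq_zero_or_pos with rfl | hn
  · simp [A, bellY_zero]
  have hsum : ∑ k ∈ range (n + 1), PowerSeries.coeff k A * bellY (n - k) =
      ∑ m ∈ Icc 1 n, atomicY m * bellY (n - m) := by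
    refine (sum_subset (fun m hm => mem_range.2 (by grind)) fun m _ hm => ?_).symm.trans
      (sum_congr rfl fun m hm => ?_)
    · obtain rfl : m = 0 := by grind
      simp [A]
    · simp [A, Nat.one_le_iff_ne_zero.1 (mem_Icc.1 hm).1]
  simp only [PowerSeries.coeff_mk, Nat.succ_eq_add_one, hsum, ← bellY_eq_sum_atomicY_mul_bellY hn,
    sub_self, if_neg hn.ne']

/-- For every `n ≥ 1`, `Y_n = Σ_{m=1}^{n} Ỹ_m · Y_{n−m}`; equivalently, the ordinary
generating functions `Ỹ = Σ_{m≥1} Ỹ_m tᵐ` and `Y = Σ_{n≥0} Y_n tⁿ` satisfy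
`Ỹ = 1 − 1/Y`, i.e. `Y·(1 − Ỹ) = 1`. -/
theorem atomicY_convolution :
    (∀ n : ℕ, 1 ≤ n → bellY n = ∑ m ∈ Finset.Icc 1 n, atomicY m * bellY (n - m)) ∧
    (PowerSeries.mk fun n => bellY n) *
        (1 - PowerSeries.mk fun m => if m = 0 then 0 else atomicY m) = 1 :=
  ⟨fun _ hn => bellY_eq_sum_atomicY_mul_bellY hn, bellSeries_mul_one_sub_atomicSeries⟩
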